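/- If X ~ C(0,1) and g(t,x) = (2x/(1+x^2)·t − (t^2 + 2(1−x^2)/(1+x^2)^2))cos(tx) + (2x/(1+x^2)·t + (t^2 + 2(1−x^2)/(1+x^2)^2))sin(tx), then for all t ∈ ℝ, E[g(t,X)] = −(1/2)(t^2 + |t| + 1)e^{−|t|}. -/

import Mathlib

open MeasureTheory Real

/-- The function `g(t,x)` arising from the Taylor expansion of the test statistic. -/
noncomputable def gFun (t x : ℝ) : ℝ :=
  (2 * x / (1 + x ^ 2) * t - (t ^ 2 + 2 * (1 - x ^ 2) / (1 + x ^ 2) ^ 2)) * Real.cos (t * x)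
    + (2 * x / (1 + x ^ 2) * t + (t ^ 2 + 2 * (1 - x ^ 2) / (1 + x ^ 2) ^ 2)) * Real.sin (t * x)

/-!
An explicit primitive `H` with `H' = g(t,·)/(1+x²) - (sin tx - cos tx) κ`, where
`κ(x) = (t²/2)/(1+x²) + 1/(1+x²)²`, reduces the expectation to
`π⁻¹ ∫ (sin tx - cos tx) κ(x) dx`. The sine part vanishes, and the cosine part comes from
Fourier inversion: `(a + b|x|) e^{-|x|}` has Fourier transform `2(a-b)/(1+w²) + 4b/(1+w²)²`
at `w = 2πξ`, which is `κ(w)` for `a = (t²+1)/4`, `b = 1/4`, so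
`∫ cos(tx) κ(x) dx = (π/2)(t² + |t| + 1) e^{-|t|}`.
-/

open Set Filter Topology FourierTransform
open scoped Complex

section Laplace

variable {c : ℂ}

theorem norm_mul_cexp_neg_mul_le (a b : ℂ) {x : ℝ} (hx : 0 ≤ x) :
    ‖(a + b * x) * cexp (-(c * x))‖
      ≤ ‖a‖ * rexp (-(c.re * x)) + ‖b‖ * (x * rexp (-(c.re * x))) := by
  rw [norm_mul, show ‖cexp (-(c * x))‖ = rexp (-(c.re * x)) by simp [Complex.norm_exp]]
  calc ‖a + b * x‖ * rexp (-(c.re * x)) ≤ (‖a‖ + ‖b‖ * x) * rexp (-(c.re * x)) := by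
        gcongr
        refine (norm_add_le _ _).trans ?_
        rw [norm_mul, Complex.norm_real, Real.norm_of_nonneg hx]
    _ = _ := by ring

theorem integrableOn_Ioi_mul_cexp_neg_mul (hc : 0 < c.re) (a b : ℂ) :
    IntegrableOn (fun x : ℝ => (a + b * x) * cexp (-(c * x))) (Ioi 0) := by
  have h₀ : IntegrableOn (fun x : ℝ => rexp (-(c.re * x))) (Ioi 0) := by
    simpa only [neg_mul] using exp_neg_integrableOn_Ioi 0 hc
  have h₁ : IntegrableOn (fun x : ℝ => x * rexp (-(c.re * x))) (Ioi 0) := by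
    simpa only [rpow_one, neg_mul] using
      integrableOn_rpow_mul_exp_neg_mul_rpow (s := 1) (p := 1) (by norm_num) one_pos hc
  refine ((h₀.const_mul ‖a‖).add (h₁.const_mul ‖b‖)).mono'
    (Continuous.aestronglyMeasurable (by fun_prop)) ?_
  filter_upwards [ae_restrict_mem measurableSet_Ioi] with x hx
  exact norm_mul_cexp_neg_mul_le a b (le_of_lt hx)

theorem tendsto_mul_cexp_neg_mul_atTop (hc : 0 < c.re) (a b : ℂ) :
    Tendsto (fun x : ℝ => (a + b * x) * cexp (-(c * x))) atTop (𝓝 0) := by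
  have h₀ := tendsto_rpow_mul_exp_neg_mul_atTop_nhds_zero 0 c.re hc
  have h₁ := tendsto_rpow_mul_exp_neg_mul_atTop_nhds_zero 1 c.re hc
  simp only [rpow_zero, rpow_one, one_mul] at h₀ h₁
  refine squeeze_zero_norm' ?_
    (by simpa using (h₀.const_mul ‖a‖).add (h₁.const_mul ‖b‖))
  filter_upwards [eventually_ge_atTop 0] with x hx
  simpa only [neg_mul] using norm_mul_cexp_neg_mul_le a b hx

theorem integral_Ioi_mul_cexp_neg_mul (hc : 0 < c.re) (a b : ℂ) :
    ∫ x in Ioi (0 : ℝ), (a + b * x) * cexp (-(c * x)) = a / c + b / c ^ 2 := by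
  have hc₀ : c ≠ 0 := by rintro rfl; simp at hc
  have hderiv (x : ℝ) : HasDerivAt (fun x : ℝ => -((a + b / c + b * x) * cexp (-(c * x))) / c)
      ((a + b * x) * cexp (-(c * x))) x := by
    have h₁ : HasDerivAt (fun z : ℂ => a + b / c + b * z) b x := by
      simpa using ((hasDerivAt_id (x : ℂ)).const_mul b).const_add (a + b / c)
    have h₂ : HasDerivAt (fun z : ℂ => cexp (-(c * z))) (cexp (-(c * x)) * -c) x := by
      simpa using ((hasDerivAt_id (x : ℂ)).const_mul c).neg.cexp
    convert ((h₁.fun_mul h₂).fun_neg.div_const c).comp_ofReal using 1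
    field_simp
    ring
  rw [integral_Ioi_of_hasDerivAt_of_tendsto' (fun x _ => hderiv x)
    (integrableOn_Ioi_mul_cexp_neg_mul hc a b)
    (by simpa using ((tendsto_mul_cexp_neg_mul_atTop hc (a + b / c) b).neg.div_const c))]
  simp only [Complex.ofReal_zero, mul_zero, neg_zero, Complex.exp_zero]
  field_simp
  ring

end Laplace

section EvenSplit

variable {E : Type*} [NormedAddCommGroup E] {F : ℝ → E}

theorem integral_eq_integral_Ioi_add_comp_neg [NormedSpace ℝ E] (hF : Integrable F) :
    ∫ x, F x = ∫ x in Ioi 0, (F x + F (-x)) := by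
  rw [← intervalIntegral.integral_Iic_add_Ioi hF.integrableOn hF.integrableOn,
    integral_add hF.integrableOn hF.comp_neg.integrableOn, integral_comp_neg_Ioi, neg_zero,
    add_comm]

theorem integrable_of_integrableOn_Ioi_of_even (heven : ∀ x, F (-x) = F x)
    (hF : IntegrableOn F (Ioi 0)) : Integrable F := by
  have hIio : IntegrableOn F (Iio 0) := by
    have h := (neg_zero (G := ℝ) ▸ hF).comp_neg_Iio
    rwa [show (fun x => F (-x)) = F from funext heven] at h
  rw [← integrableOn_univ, ← Iio_union_Ici (a := (0 : ℝ))]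
  exact hIio.union (Iff.mpr integrableOn_Ici_iff_integrableOn_Ioi hF)

end EvenSplit

theorem ofReal_mul_exp_neg_abs_of_pos (a b : ℝ) {x : ℝ} (hx : 0 < x) :
    ((((a + b * |x|) * rexp (-|x|) : ℝ)) : ℂ) = (a + b * x) * cexp (-(1 * x)) := by
  rw [abs_of_pos hx]
  push_cast
  ring_nf

theorem integrable_mul_exp_neg_abs (a b : ℝ) :
    Integrable (fun x : ℝ => (((a + b * |x|) * rexp (-|x|) : ℝ) : ℂ)) := by
  refine integrable_of_integrableOn_Ioi_of_even (fun x => by simp only [abs_neg]) ?_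
  refine (integrableOn_Ioi_mul_cexp_neg_mul (c := 1) (by simp) a b).congr_fun
    (fun x hx => (ofReal_mul_exp_neg_abs_of_pos a b hx).symm) measurableSet_Ioi

theorem fourier_mul_exp_neg_abs (a b ξ : ℝ) :
    𝓕 (fun x : ℝ => (((a + b * |x|) * rexp (-|x|) : ℝ) : ℂ)) ξ
      = ((2 * (a - b) / (1 + (2 * π * ξ) ^ 2)
          + 4 * b / (1 + (2 * π * ξ) ^ 2) ^ 2 : ℝ) : ℂ) := by
  set w : ℝ := 2 * π * ξ
  set u : ℂ := 1 + w * Complex.I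
  set v : ℂ := 1 - w * Complex.I
  have hu : 0 < u.re := by simp [u]
  have hv : 0 < v.re := by simp [v]
  have hsplit : ∀ x ∈ Ioi (0 : ℝ),
      cexp (↑(-2 * π * x * ξ) * Complex.I) * (((a + b * |x|) * rexp (-|x|) : ℝ) : ℂ)
        + cexp (↑(-2 * π * -x * ξ) * Complex.I) * (((a + b * |-x|) * rexp (-|-x|) : ℝ) : ℂ)
      = (a + b * x) * cexp (-(u * x)) + (a + b * x) * cexp (-(v * x)) := by
    intro x hx
    rw [abs_neg, ofReal_mul_exp_neg_abs_of_pos a b hx, mul_left_comm, mul_left_comm (cexp _),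
      ← Complex.exp_add, ← Complex.exp_add]
    congr 3 <;> (simp only [u, v, w]; push_cast; ring)
  rw [Real.fourier_real_eq_integral_exp_smul]
  simp_rw [smul_eq_mul]
  rw [integral_eq_integral_Ioi_add_comp_neg
      ((integrable_mul_exp_neg_abs a b).bdd_mul (c := 1) (by fun_prop)
        (ae_of_all _ fun x => by rw [Complex.norm_exp_ofReal_mul_I])),
    setIntegral_congr_fun measurableSet_Ioi hsplit,
    integral_add (integrableOn_Ioi_mul_cexp_neg_mul hu _ _)
      (integrableOn_Ioi_mul_cexp_neg_mul hv _ _),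
    integral_Ioi_mul_cexp_neg_mul hu, integral_Ioi_mul_cexp_neg_mul hv]
  have hu₀ : u ≠ 0 := fun h => by simp [h] at hu
  have hv₀ : v ≠ 0 := fun h => by simp [h] at hv
  have huv : u * v = 1 + (w : ℂ) ^ 2 := by
    simp only [u, v]
    linear_combination (-(w : ℂ) ^ 2) * Complex.I_sq
  push_cast
  rw [← huv]
  field_simp
  simp only [u, v]
  ring

theorem abs_div_one_add_sq_le (y x : ℝ) : |y / (1 + x ^ 2)| ≤ |y| := by
  rw [abs_div, abs_of_pos (by positivity : (0 : ℝ) < 1 + x ^ 2)]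
  exact div_le_self (abs_nonneg y) (by nlinarith [sq_nonneg x])

theorem abs_div_one_add_sq_le_half (x : ℝ) : |x / (1 + x ^ 2)| ≤ 1 / 2 := by
  rw [abs_div, abs_of_pos (by positivity : (0 : ℝ) < 1 + x ^ 2),
    div_le_iff₀ (by positivity)]
  nlinarith [sq_nonneg (|x| - 1), sq_abs x]

theorem abs_mul_add_mul_le {u v : ℝ} (hu : |u| ≤ 1) (hv : |v| ≤ 1) (A B : ℝ) :
    |A * u + B * v| ≤ |A| + |B| :=
  calc |A * u + B * v| ≤ |A| * |u| + |B| * |v| := by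
        simpa only [abs_mul] using abs_add_le (A * u) (B * v)
    _ ≤ |A| + |B| := by gcongr <;> exact mul_le_of_le_one_right (abs_nonneg _) ‹_›

theorem integrable_div_one_add_sq {f : ℝ → ℝ} (hf : AEStronglyMeasurable f) {C : ℝ}
    (hC : ∀ x, |f x| ≤ C) : Integrable fun x => f x / (1 + x ^ 2) := by
  simpa only [div_eq_mul_inv] using integrable_inv_one_add_sq.bdd_mul hf (ae_of_all _ hC)

theorem integrable_add_div_one_add_sq_sq (α β : ℝ) :
    Integrable fun w : ℝ => α / (1 + w ^ 2) + β / (1 + w ^ 2) ^ 2 := by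
  refine (integrable_div_one_add_sq (f := fun w => α + β / (1 + w ^ 2)) (C := |α| + |β|)
    (Measurable.aestronglyMeasurable (by fun_prop))
    (fun w => (abs_add_le _ _).trans (add_le_add le_rfl (abs_div_one_add_sq_le _ _)))).congr
    (ae_of_all _ fun w => ?_)
  field_simp

theorem integral_cexp_mul_I_eq_of_fourier {f r : ℝ → ℂ} (hf : Integrable f)
    (hfc : Continuous f) (hr : Integrable r) (hfr : ∀ ξ, 𝓕 f ξ = r (2 * π * ξ)) (t : ℝ) :
    ∫ w : ℝ, cexp (t * w * Complex.I) * r w = 2 * π * f t := by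
  have h2π : (0 : ℝ) < 2 * π := by positivity
  have hFf : Integrable (𝓕 f) :=
    (hr.comp_mul_left' h2π.ne').congr (ae_of_all _ fun ξ => (hfr ξ).symm)
  have hinv := hf.fourierInv_fourier_eq hFf hfc.continuousAt (v := t)
  rw [Real.fourierInv_eq_fourier_neg, Real.fourier_real_eq_integral_exp_smul] at hinv
  have hG : ∀ ξ : ℝ, cexp (↑(-2 * π * ξ * -t) * Complex.I) • 𝓕 f ξ
      = (fun w : ℝ => cexp (t * w * Complex.I) * r w) (2 * π * ξ) := by
    intro ξ
    rw [hfr, smul_eq_mul]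
    push_cast
    ring_nf
  rw [integral_congr_ae (ae_of_all _ hG),
    Measure.integral_comp_mul_left (fun w : ℝ => cexp (t * w * Complex.I) * r w),
    abs_of_pos (inv_pos.mpr h2π), Complex.real_smul] at hinv
  have h2π' : (2 * π : ℂ) ≠ 0 := by exact_mod_cast h2π.ne'
  rw [← hinv, ← mul_assoc]
  push_cast
  rw [mul_inv_cancel₀ h2π', one_mul]

theorem integral_cexp_mul_I_mul_add_div_one_add_sq_sq (a b t : ℝ) :
    ∫ w : ℝ, cexp (t * w * Complex.I)
        * ((2 * (a - b) / (1 + w ^ 2) + 4 * b / (1 + w ^ 2) ^ 2 : ℝ) : ℂ)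
      = ((2 * π * ((a + b * |t|) * rexp (-|t|)) : ℝ) : ℂ) := by
  refine (integral_cexp_mul_I_eq_of_fourier (integrable_mul_exp_neg_abs a b) (by fun_prop)
    (integrable_add_div_one_add_sq_sq _ _).ofReal (fourier_mul_exp_neg_abs a b) t).trans ?_
  push_cast
  ring

theorem integral_sin_sub_cos_mul {k : ℝ → ℝ} (hk : Integrable k) (t : ℝ) :
    ∫ x, (sin (t * x) - cos (t * x)) * k x
      = (∫ x : ℝ, cexp (t * x * Complex.I) * k x).im
        - (∫ x : ℝ, cexp (t * x * Complex.I) * k x).re := by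
  have hF : Integrable fun x : ℝ => cexp (t * x * Complex.I) * k x :=
    hk.ofReal.bdd_mul (c := 1) (by fun_prop)
      (ae_of_all _ fun x => by rw [← Complex.ofReal_mul, Complex.norm_exp_ofReal_mul_I])
  calc ∫ x, (sin (t * x) - cos (t * x)) * k x
      = ∫ x : ℝ, RCLike.re (-(1 + Complex.I) * (cexp (t * x * Complex.I) * k x)) := by
        refine integral_congr_ae (ae_of_all _ fun x => ?_)
        simp only [← Complex.ofReal_mul, RCLike.re_to_complex, Complex.mul_re, Complex.mul_im,
          Complex.exp_ofReal_mul_I_re, Complex.exp_ofReal_mul_I_im, Complex.ofReal_re,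
          Complex.ofReal_im, Complex.neg_re, Complex.neg_im, Complex.add_re, Complex.add_im,
          Complex.one_re, Complex.one_im, Complex.I_re, Complex.I_im]
        ring
    _ = _ := by
        rw [integral_re (hF.const_mul _), integral_const_mul]
        simp only [RCLike.mul_re, RCLike.re_to_complex, RCLike.im_to_complex, Complex.add_re,
          Complex.add_im, Complex.neg_re, Complex.neg_im, Complex.one_re, Complex.one_im,
          Complex.I_re, Complex.I_im]
        ring

noncomputable def gPrimitive (t x : ℝ) : ℝ :=
  (sin (t * x) * (x / (1 + x ^ 2) - t / 2) - cos (t * x) * (x / (1 + x ^ 2) + t / 2)) / (1 + x ^ 2)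

theorem hasDerivAt_gPrimitive (t x : ℝ) :
    HasDerivAt (gPrimitive t) (gFun t x / (1 + x ^ 2)
      - (sin (t * x) - cos (t * x)) * (t ^ 2 / 2 / (1 + x ^ 2) + 1 / (1 + x ^ 2) ^ 2)) x := by
  have hp : 1 + x ^ 2 ≠ 0 := by positivity
  have hs := ((hasDerivAt_id' x).const_mul t).sin
  have hc := ((hasDerivAt_id' x).const_mul t).cos
  have hd : HasDerivAt (fun x => 1 + x ^ 2) (2 * x) x := by
    simpa using (hasDerivAt_pow 2 x).const_add 1
  have hq := (hasDerivAt_id' x).fun_div hd hp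
  refine (((hs.fun_mul (hq.sub_const (t / 2))).fun_sub
    (hc.fun_mul (hq.add_const (t / 2)))).fun_div hd hp).congr_deriv ?_
  unfold gFun
  field_simp
  ring

theorem abs_gFun_le (t x : ℝ) : |gFun t x| ≤ 2 * (|t| + t ^ 2 + 2) := by
  have hp : |2 * x / (1 + x ^ 2)| ≤ 1 := by
    rw [mul_div_assoc, abs_mul, abs_two]
    linarith [abs_div_one_add_sq_le_half x]
  have hq : |2 * (1 - x ^ 2) / (1 + x ^ 2) ^ 2| ≤ 2 := by
    rw [abs_div, abs_of_pos (by positivity : (0 : ℝ) < (1 + x ^ 2) ^ 2),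
      div_le_iff₀ (by positivity)]
    exact abs_le.mpr ⟨by nlinarith [sq_nonneg x], by nlinarith [sq_nonneg x]⟩
  have hpt : |2 * x / (1 + x ^ 2) * t| ≤ |t| := by
    rw [abs_mul]
    exact mul_le_of_le_one_left (abs_nonneg t) hp
  have hT : |t ^ 2 + 2 * (1 - x ^ 2) / (1 + x ^ 2) ^ 2| ≤ t ^ 2 + 2 := by
    refine (abs_add_le _ _).trans ?_
    rw [abs_of_nonneg (sq_nonneg t)]
    linarith
  refine (abs_mul_add_mul_le (abs_cos_le_one _) (abs_sin_le_one _) _ _).trans ?_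
  linarith [abs_sub (2 * x / (1 + x ^ 2) * t) (t ^ 2 + 2 * (1 - x ^ 2) / (1 + x ^ 2) ^ 2),
    abs_add_le (2 * x / (1 + x ^ 2) * t) (t ^ 2 + 2 * (1 - x ^ 2) / (1 + x ^ 2) ^ 2)]

theorem integrable_gPrimitive (t : ℝ) : Integrable (gPrimitive t) := by
  refine integrable_div_one_add_sq (C := 1 + |t|) (Measurable.aestronglyMeasurable (by fun_prop))
    fun x => ?_
  set q := x / (1 + x ^ 2)
  calc |sin (t * x) * (q - t / 2) - cos (t * x) * (q + t / 2)|
      = |(q - t / 2) * sin (t * x) + -(q + t / 2) * cos (t * x)| := by ring_nf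
    _ ≤ |q - t / 2| + |-(q + t / 2)| :=
        abs_mul_add_mul_le (abs_sin_le_one _) (abs_cos_le_one _) _ _
    _ ≤ 1 + |t| := by
      rw [abs_neg]
      linarith [abs_sub q (t / 2), abs_add_le q (t / 2), abs_div_one_add_sq_le_half x,
        show |t / 2| = |t| / 2 by rw [abs_div, abs_two]]

theorem integral_gFun_div_one_add_sq (t : ℝ) :
    ∫ x, gFun t x / (1 + x ^ 2)
      = ∫ x, (sin (t * x) - cos (t * x)) * (t ^ 2 / 2 / (1 + x ^ 2) + 1 / (1 + x ^ 2) ^ 2) := by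
  have hR : Integrable fun x =>
      (sin (t * x) - cos (t * x)) * (t ^ 2 / 2 / (1 + x ^ 2) + 1 / (1 + x ^ 2) ^ 2) :=
    (integrable_add_div_one_add_sq_sq _ _).bdd_mul (c := 2)
      (Measurable.aestronglyMeasurable (by fun_prop)) (ae_of_all _ fun x => by
        rw [Real.norm_eq_abs]
        linarith [abs_sub (sin (t * x)) (cos (t * x)), abs_sin_le_one (t * x),
          abs_cos_le_one (t * x)])
  have hg : Integrable fun x => gFun t x / (1 + x ^ 2) :=
    integrable_div_one_add_sq (Measurable.aestronglyMeasurable (by unfold gFun; fun_prop))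
      (abs_gFun_le t)
  rw [← sub_eq_zero, ← integral_sub hg hR]
  exact integral_eq_zero_of_hasDerivAt_of_integrable (hasDerivAt_gPrimitive t) (hg.sub hR)
    (integrable_gPrimitive t)

/-- If `X ~ C(0,1)`, then `E[g(t,X)] = -(1/2)(t² + |t| + 1) e^{-|t|}` for all `t`. -/
theorem cauchy_Eg (t : ℝ) :
    (∫ x : ℝ, gFun t x * (1 / (π * (1 + x ^ 2))))
      = -(1 / 2) * (t ^ 2 + |t| + 1) * Real.exp (-|t|) := by
  set κ : ℝ → ℝ := fun x => t ^ 2 / 2 / (1 + x ^ 2) + 1 / (1 + x ^ 2) ^ 2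
  have hF : ∫ x : ℝ, cexp (t * x * Complex.I) * κ x
      = ((2 * π * (((t ^ 2 + 1) / 4 + 1 / 4 * |t|) * rexp (-|t|)) : ℝ) : ℂ) := by
    convert integral_cexp_mul_I_mul_add_div_one_add_sq_sq ((t ^ 2 + 1) / 4) (1 / 4) t using 5
    ring
  calc ∫ x, gFun t x * (1 / (π * (1 + x ^ 2)))
      = π⁻¹ * ∫ x, gFun t x / (1 + x ^ 2) := by
        rw [← integral_const_mul]
        congr 1 with x
        field_simp
    _ = π⁻¹ * ((∫ x : ℝ, cexp (t * x * Complex.I) * κ x).im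
          - (∫ x : ℝ, cexp (t * x * Complex.I) * κ x).re) := by
        rw [integral_gFun_div_one_add_sq,
          integral_sin_sub_cos_mul (integrable_add_div_one_add_sq_sq _ _)]
    _ = _ := by
        rw [hF, Complex.ofReal_im, Complex.ofReal_re]
        field_simp
        ring
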